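/- arXiv:1703.03268 — 2 statements merged into one kernel-verified Lean document; each statement's English description precedes it below -/
import Mathlib

section
/- Let G be a finite simple connected graph of order n and size m, with maximum degree Δ and n_e vertices of even degree. Then γ^NN_s(G) ≥ (2m + n_e − nΔ)/(Δ + 1). -/
open Finset

/-- The closed neighborhood of `v` in `G`, as a `Finset`. -/
def closedNbr {V : Type*} [Fintype V] [DecidableEq V] (G : SimpleGraph V) [DecidableRel G.Adj]
    (v : V) : Finset V := insert v (G.neighborFinset v)

/-- `f` is a nonnegative signed dominating function of `G`:
`f : V → {-1, 1}` and `∑_{u ∈ N[v]} f(u) ≥ 0` for every vertex `v`. -/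
def IsNNSDF {V : Type*} [Fintype V] [DecidableEq V] (G : SimpleGraph V) [DecidableRel G.Adj]
    (f : V → ℤ) : Prop :=
  (∀ v, f v = 1 ∨ f v = -1) ∧ ∀ v, 0 ≤ ∑ u ∈ closedNbr G v, f u

/-- The nonnegative signed domination number `γ^NN_s(G)`. -/
noncomputable def gammaNNs {V : Type*} [Fintype V] [DecidableEq V] (G : SimpleGraph V)
    [DecidableRel G.Adj] : ℤ :=
  sInf {w : ℤ | ∃ f : V → ℤ, IsNNSDF G f ∧ w = ∑ v, f v}

lemma card_closedNbr {V : Type*} [Fintype V] [DecidableEq V] (G : SimpleGraph V)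
    [DecidableRel G.Adj] (v : V) : (closedNbr G v).card = G.degree v + 1 := by
  rw [closedNbr, Finset.card_insert_of_notMem (by simp), SimpleGraph.card_neighborFinset_eq_degree]

lemma mem_closedNbr_comm {V : Type*} [Fintype V] [DecidableEq V] (G : SimpleGraph V)
    [DecidableRel G.Adj] (u v : V) : u ∈ closedNbr G v ↔ v ∈ closedNbr G u := by
  simp only [closedNbr, Finset.mem_insert, SimpleGraph.mem_neighborFinset]
  constructor <;> rintro (h | h) <;> simp [h.symm, G.adj_comm u v] <;> tauto

lemma swap_sum {V : Type*} [Fintype V] [DecidableEq V] (G : SimpleGraph V)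
    [DecidableRel G.Adj] (f : V → ℤ) :
    ∑ v, ∑ u ∈ closedNbr G v, f u = ∑ u, ((G.degree u : ℤ) + 1) * f u := by
  have : ∀ v, ∑ u ∈ closedNbr G v, f u = ∑ u, if u ∈ closedNbr G v then f u else 0 := by
    intro v; rw [Finset.sum_ite_mem, Finset.univ_inter]
  simp_rw [this]
  rw [Finset.sum_comm]
  refine Finset.sum_congr rfl fun u _ => ?_
  simp_rw [mem_closedNbr_comm G u]
  rw [Finset.sum_ite_mem, Finset.univ_inter, Finset.sum_const, card_closedNbr, nsmul_eq_mul]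
  push_cast; ring

lemma key_bound {V : Type*} [Fintype V] [DecidableEq V] (G : SimpleGraph V)
    [DecidableRel G.Adj] (f : V → ℤ) (hf : IsNNSDF G f) :
    2 * (G.edgeFinset.card : ℤ) + ((univ.filter fun v => Even (G.degree v)).card : ℤ)
      - (Fintype.card V : ℤ) * G.maxDegree ≤ ((G.maxDegree : ℤ) + 1) * ∑ v, f v := by
  have hone : ∀ v, Even (G.degree v) → 1 ≤ ∑ u ∈ closedNbr G v, f u := by
    intro v hv
    have h0 := hf.2 v
    have heven : Even (∑ u ∈ closedNbr G v, (f u + 1)) := by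
      rw [even_iff_two_dvd]
      exact Finset.dvd_sum fun u _ => by rcases hf.1 u with h | h <;> simp [h]
    rw [Finset.sum_add_distrib, Finset.sum_const, card_closedNbr, nsmul_eq_mul, mul_one] at heven
    obtain ⟨k, hk⟩ := heven
    obtain ⟨d, hd⟩ := hv
    omega
  have h2 : ((univ.filter fun v => Even (G.degree v)).card : ℤ)
      ≤ ∑ v, ∑ u ∈ closedNbr G v, f u := by
    calc ((univ.filter fun v => Even (G.degree v)).card : ℤ)
        = ∑ v ∈ univ.filter fun v => Even (G.degree v), 1 := by simp
      _ ≤ ∑ v ∈ univ.filter fun v => Even (G.degree v), ∑ u ∈ closedNbr G v, f u :=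
          Finset.sum_le_sum fun v hv => hone v (Finset.mem_filter.mp hv).2
      _ ≤ ∑ v, ∑ u ∈ closedNbr G v, f u :=
          Finset.sum_le_sum_of_subset_of_nonneg (Finset.filter_subset _ _)
            fun v _ _ => hf.2 v
  rw [swap_sum] at h2
  have h3 : ∑ v, ((G.maxDegree : ℤ) - G.degree v) * (-1) ≤
      ∑ v, ((G.maxDegree : ℤ) - G.degree v) * f v := by
    refine Finset.sum_le_sum fun v _ => ?_
    have hd : (G.degree v : ℤ) ≤ G.maxDegree := by
      exact_mod_cast G.degree_le_maxDegree v
    rcases hf.1 v with h | h <;> rw [h] <;> nlinarith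
  have hsumdeg : ∑ v, (G.degree v : ℤ) = 2 * G.edgeFinset.card := by
    exact_mod_cast congrArg (Nat.cast : ℕ → ℤ) G.sum_degrees_eq_twice_card_edges
  have hexp : ((G.maxDegree : ℤ) + 1) * ∑ v, f v
      = ∑ v, ((G.degree v : ℤ) + 1) * f v + ∑ v, ((G.maxDegree : ℤ) - G.degree v) * f v := by
    rw [Finset.mul_sum, ← Finset.sum_add_distrib]
    exact Finset.sum_congr rfl fun v _ => by ring
  have hlhs : ∑ v, ((G.maxDegree : ℤ) - G.degree v) * (-1)
      = 2 * (G.edgeFinset.card : ℤ) - (Fintype.card V : ℤ) * G.maxDegree := by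
    simp_rw [mul_neg_one, Finset.sum_neg_distrib, Finset.sum_sub_distrib, hsumdeg,
      Finset.sum_const, nsmul_eq_mul, Finset.card_univ]
    ring
  rw [hexp]
  rw [hlhs] at h3
  linarith

/-- For a finite simple connected graph `G` of order `n`, size `m`,
maximum degree `Δ` and `n_e` even-degree vertices,
`γ^NN_s(G) ≥ (2m + n_e - nΔ)/(Δ + 1)`. -/
theorem gammaNNs_lower_bound_2 {V : Type*} [Fintype V] [DecidableEq V]
    (G : SimpleGraph V) [DecidableRel G.Adj] (hconn : G.Connected)
    (n m nₑ Δ : ℕ) (hn : n = Fintype.card V) (hm : m = G.edgeFinset.card)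
    (hΔ : Δ = G.maxDegree)
    (hne : nₑ = (univ.filter fun v => Even (G.degree v)).card) :
    (2 * (m : ℝ) + nₑ - (n : ℝ) * Δ) / ((Δ : ℝ) + 1) ≤ (gammaNNs G : ℝ) := by
  have hset : (1 : V → ℤ) ∈ {f : V → ℤ | IsNNSDF G f} := by
    constructor
    · intro v; left; rfl
    · intro v; simp
  have hne' : {w : ℤ | ∃ f : V → ℤ, IsNNSDF G f ∧ w = ∑ v, f v}.Nonempty :=
    ⟨∑ v, (1 : V → ℤ) v, 1, hset, rfl⟩
  have hbdd : BddBelow {w : ℤ | ∃ f : V → ℤ, IsNNSDF G f ∧ w = ∑ v, f v} := by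
    refine ⟨-(Fintype.card V : ℤ), ?_⟩
    rintro w ⟨f, hf, rfl⟩
    calc -(Fintype.card V : ℤ) = ∑ _v : V, (-1 : ℤ) := by simp
      _ ≤ ∑ v, f v := Finset.sum_le_sum fun v _ => by rcases hf.1 v with h | h <;> simp [h]
  obtain ⟨f, hf, hfw⟩ := Int.csInf_mem hne' hbdd
  have hkey := key_bound G f hf
  rw [← hfw] at hkey
  rw [div_le_iff₀ (by positivity)]
  have : (2 * (m : ℤ) + nₑ - (n : ℤ) * Δ) ≤ gammaNNs G * (Δ + 1) := by
    rw [hn, hm, hΔ, hne]; unfold gammaNNs; linarith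
  calc 2 * (m : ℝ) + nₑ - (n : ℝ) * Δ = ((2 * (m : ℤ) + nₑ - (n : ℤ) * Δ : ℤ) : ℝ) := by
        push_cast; ring
    _ ≤ ((gammaNNs G * (Δ + 1) : ℤ) : ℝ) := by exact_mod_cast this
    _ = (gammaNNs G : ℝ) * ((Δ : ℝ) + 1) := by push_cast; ring
end

section
/- Let r ≥ 1 with r even, let G be an r-regular finite simple graph of order n, and let 1 ≤ k ≤ n be a positive integer. Then γ^NN_{ks}(G) ≥ k(r + 2)/(r + 1) − n. -/
open Finset

/-- `f` is a nonnegative signed `k`-subdominating function of `G`: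
`f : V → {-1, 1}` and `∑_{u ∈ N[v]} f(u) ≥ 0` for at least `k` vertices `v`. -/
def IsNNSkSDF {V : Type*} [Fintype V] [DecidableEq V] (G : SimpleGraph V) [DecidableRel G.Adj]
    (k : ℕ) (f : V → ℤ) : Prop :=
  (∀ v, f v = 1 ∨ f v = -1) ∧
    k ≤ (univ.filter fun v => 0 ≤ ∑ u ∈ closedNbr G v, f u).card

/-- The nonnegative signed `k`-subdomination number `γ^NN_{ks}(G)`. -/
noncomputable def gammaNNks {V : Type*} [Fintype V] [DecidableEq V] (G : SimpleGraph V)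
    [DecidableRel G.Adj] (k : ℕ) : ℤ :=
  sInf {w : ℤ | ∃ f : V → ℤ, IsNNSkSDF G k f ∧ w = ∑ v, f v}

lemma closedNbr_card {V : Type*} [Fintype V] [DecidableEq V] (G : SimpleGraph V)
    [DecidableRel G.Adj] {r : ℕ} (hreg : G.IsRegularOfDegree r) (v : V) :
    (closedNbr G v).card = r + 1 := by
  have hv : v ∉ G.neighborFinset v := by simp
  rw [closedNbr, Finset.card_insert_of_notMem hv, G.card_neighborFinset_eq_degree, hreg v]

lemma sum_pm {V : Type*} [DecidableEq V] (f : V → ℤ) (hpm : ∀ v, f v = 1 ∨ f v = -1)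
    (S : Finset V) :
    ∑ u ∈ S, f u = 2 * ((S.filter fun u => f u = 1).card : ℤ) - S.card := by
  classical
  rw [← Finset.sum_filter_add_sum_filter_not S (fun u => f u = 1)]
  have h1 : ∑ u ∈ S.filter (fun u => f u = 1), f u
      = ((S.filter fun u => f u = 1).card : ℤ) := by
    rw [Finset.sum_congr rfl (fun u hu => (Finset.mem_filter.1 hu).2)]; simp
  have h2 : ∑ u ∈ S.filter (fun u => ¬ f u = 1), f u
      = -(((S.filter fun u => ¬ f u = 1).card : ℤ)) := by
    rw [Finset.sum_congr rfl (fun u hu => (hpm u).resolve_left (Finset.mem_filter.1 hu).2)]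
    simp
  have h3 := Finset.card_filter_add_card_filter_not (s := S) (p := fun u => f u = 1)
  rw [h1, h2]
  have : ((S.filter fun u => f u = 1).card : ℤ) + ((S.filter fun u => ¬ f u = 1).card : ℤ)
      = (S.card : ℤ) := by exact_mod_cast h3
  linarith

lemma key {V : Type*} [Fintype V] [DecidableEq V] (G : SimpleGraph V) [DecidableRel G.Adj]
    {r : ℕ} (hreg : G.IsRegularOfDegree r) (hrEven : Even r) {k : ℕ} {f : V → ℤ}
    (hf : IsNNSkSDF G k f) :
    (k : ℤ) * ((r : ℤ) + 2) ≤ ((r : ℤ) + 1) * (∑ v, f v) + ((r : ℤ) + 1) * Fintype.card V := by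
  obtain ⟨hpm, hk⟩ := hf
  set A := univ.filter fun v => 0 ≤ ∑ u ∈ closedNbr G v, f u with hA
  set P := univ.filter fun v => f v = 1 with hP
  have hsum : ∑ v, f v = 2 * (P.card : ℤ) - Fintype.card V := by
    simpa [hP] using sum_pm f hpm univ
  have hloc : ∀ v ∈ A, ((r : ℤ) + 2) ≤ 2 * (((closedNbr G v).filter fun u => f u = 1).card : ℤ) := by
    intro v hv
    have h0 : 0 ≤ ∑ u ∈ closedNbr G v, f u := (Finset.mem_filter.1 hv).2
    rw [sum_pm f hpm, closedNbr_card G hreg v] at h0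
    obtain ⟨m, hm⟩ := hrEven
    push_cast at h0 ⊢
    omega
  have hdouble : ∑ v, (((closedNbr G v).filter fun u => f u = 1).card : ℤ)
      = (P.card : ℤ) * ((r : ℤ) + 1) := by
    have h1 : ∀ v : V, ((closedNbr G v).filter fun u => f u = 1)
        = P.filter (· ∈ closedNbr G v) := by
      intro v; ext u; simp [hP, and_comm]
    calc ∑ v, (((closedNbr G v).filter fun u => f u = 1).card : ℤ)
        = ∑ v, ∑ u ∈ P, (if u ∈ closedNbr G v then (1 : ℤ) else 0) := by
          refine Finset.sum_congr rfl fun v _ => ?_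
          rw [h1 v, Finset.card_filter]
          push_cast
          rfl
      _ = ∑ u ∈ P, ∑ v, (if u ∈ closedNbr G v then (1 : ℤ) else 0) := Finset.sum_comm
      _ = ∑ u ∈ P, ((r : ℤ) + 1) := by
          refine Finset.sum_congr rfl fun u _ => ?_
          have : ∀ v : V, (u ∈ closedNbr G v) ↔ (v ∈ closedNbr G u) :=
            fun v => mem_closedNbr_comm G u v
          simp only [this]
          rw [Finset.sum_boole]
          have : (univ.filter fun v => v ∈ closedNbr G u) = closedNbr G u := by
            ext v; simp
          rw [this, closedNbr_card G hreg u]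
          push_cast; ring
      _ = (P.card : ℤ) * ((r : ℤ) + 1) := by
          rw [Finset.sum_const, nsmul_eq_mul]
  have hkA : (k : ℤ) ≤ A.card := by exact_mod_cast hk
  have h2 : (A.card : ℤ) * ((r : ℤ) + 2)
      ≤ ∑ v ∈ A, 2 * (((closedNbr G v).filter fun u => f u = 1).card : ℤ) := by
    calc (A.card : ℤ) * ((r : ℤ) + 2) = ∑ _v ∈ A, ((r : ℤ) + 2) := by
          rw [Finset.sum_const, nsmul_eq_mul]
      _ ≤ _ := Finset.sum_le_sum hloc
  have h3 : ∑ v ∈ A, 2 * (((closedNbr G v).filter fun u => f u = 1).card : ℤ)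
      ≤ ∑ v, 2 * (((closedNbr G v).filter fun u => f u = 1).card : ℤ) :=
    Finset.sum_le_sum_of_subset_of_nonneg (Finset.subset_univ A)
      (fun v _ _ => by positivity)
  have h4 : ∑ v, 2 * (((closedNbr G v).filter fun u => f u = 1).card : ℤ)
      = 2 * ((P.card : ℤ) * ((r : ℤ) + 1)) := by
    rw [← Finset.mul_sum, hdouble]
  have hfinal : (k : ℤ) * ((r : ℤ) + 2) ≤ 2 * ((P.card : ℤ) * ((r : ℤ) + 1)) := by
    have := mul_le_mul_of_nonneg_right hkA (by positivity : (0 : ℤ) ≤ (r : ℤ) + 2)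
    linarith
  rw [hsum]
  ring_nf
  ring_nf at hfinal
  linarith

/-- For `r ≥ 1` even, an `r`-regular finite simple graph `G` of order `n`
and `1 ≤ k ≤ n`, `γ^NN_{ks}(G) ≥ k(r + 2)/(r + 1) - n`. -/
theorem gammaNNks_regular_even {V : Type*} [Fintype V] [DecidableEq V]
    (G : SimpleGraph V) [DecidableRel G.Adj]
    (r : ℕ) (hr : 1 ≤ r) (hreg : G.IsRegularOfDegree r) (hrEven : Even r)
    (k : ℕ) (hk1 : 1 ≤ k) (hk2 : k ≤ Fintype.card V) :
    (k : ℝ) * ((r : ℝ) + 2) / ((r : ℝ) + 1) - Fintype.card V ≤ (gammaNNks G k : ℝ) := by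
  set S : Set ℤ := {w : ℤ | ∃ f : V → ℤ, IsNNSkSDF G k f ∧ w = ∑ v, f v} with hS
  have hne : S.Nonempty := by
    refine ⟨(Fintype.card V : ℤ), fun _ => (1 : ℤ), ⟨fun v => Or.inl rfl, ?_⟩, by simp⟩
    have : (univ.filter fun v => 0 ≤ ∑ u ∈ closedNbr G v, (1 : ℤ)) = univ := by
      refine Finset.filter_true_of_mem fun v _ => ?_
      simp
    rw [this, Finset.card_univ]
    exact hk2
  have hbdd : BddBelow S := by
    refine ⟨-(Fintype.card V : ℤ), fun w hw => ?_⟩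
    obtain ⟨f, ⟨hpm, _⟩, hwf⟩ := hw
    have : ∑ v, (-1 : ℤ) ≤ ∑ v, f v :=
      Finset.sum_le_sum fun v _ => by rcases hpm v with h | h <;> omega
    simp only [Finset.sum_const, Finset.card_univ, nsmul_eq_mul, mul_neg_one] at this
    omega
  have hmem : sInf S ∈ S := Int.csInf_mem hne hbdd
  obtain ⟨f, hf, heq⟩ := hmem
  have hz := key G hreg hrEven hf
  rw [← heq] at hz
  have hg : gammaNNks G k = sInf S := rfl
  rw [hg]
  have hr1 : (0 : ℝ) < (r : ℝ) + 1 := by positivity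
  rw [sub_le_iff_le_add, div_le_iff₀ hr1]
  have hzr : (k : ℝ) * ((r : ℝ) + 2) ≤ ((r : ℝ) + 1) * ((sInf S : ℤ) : ℝ) + ((r : ℝ) + 1) * Fintype.card V := by
    exact_mod_cast hz
  linarith
end
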